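/- (Error bound on boundary states.) Fix N ≥ 2 and a real ε with 0 ≤ ε ≤ ½. Then for every triple (p, p̃, (i, j)) in the perturbed-pair family 𝒫(ε), the errors at the two boundary states satisfy |p̃ i − p i| ≤ 2ε and |p̃ j − p j| ≤ 2ε. -/

import Mathlib

noncomputable section

/-- Series composition: distribution of `min` of two independent states. -/
def smin {N : ℕ} (p q : Fin N → ℝ) : Fin N → ℝ :=
  fun k => ∑ i, ∑ j, if min i j = k then p i * q j else 0

/-- Parallel composition: distribution of `max` of two independent states. -/
def smax {N : ℕ} (p q : Fin N → ℝ) : Fin N → ℝ :=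
  fun k => ∑ i, ∑ j, if max i j = k then p i * q j else 0

/-- The point mass at state `s`. -/
def delta {N : ℕ} (s : Fin N) : Fin N → ℝ := fun i => if i = s then 1 else 0

/-- The vector with value `a` at state `0`, `b` at state `N-1`, `0` elsewhere
(i.e. `a·δ₀ + b·δ_{N-1}` for `N ≥ 2`). -/
def endSwitch (N : ℕ) (a b : ℝ) : Fin N → ℝ :=
  fun i => (if (i : ℕ) = 0 then a else 0) + (if (i : ℕ) = N - 1 then b else 0)

/-- The perturbed-pair family `𝒫(ε)`: triples `(p, p̃, (i, j))`, where `p` is the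
ideal distribution built by the binary `N`-state construction on states
`i, …, j` and `p̃` is the distribution of the same circuit in which each
½-pswitch `½·δ₀ + ½·δ_{N-1}` is perturbed to `(½+ε̂)·δ₀ + (½-ε̂)·δ_{N-1}` with
`|ε̂| ≤ ε`. -/
inductive Pert (N : ℕ) (ε : ℝ) :
    (Fin N → ℝ) → (Fin N → ℝ) → Fin N → Fin N → Prop
  | point (s : Fin N) : Pert N ε (delta s) (delta s) s s
  | step {p p' u u' : Fin N → ℝ} {i k j : Fin N} {ε' : ℝ} :
      Pert N ε p p' i k → Pert N ε u u' k j →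
      (∀ t, p t ≠ 0 → i ≤ t ∧ t ≤ k) → (∀ t, p' t ≠ 0 → i ≤ t ∧ t ≤ k) →
      (∀ t, u t ≠ 0 → k ≤ t ∧ t ≤ j) → (∀ t, u' t ≠ 0 → k ≤ t ∧ t ≤ j) →
      |ε'| ≤ ε →
      Pert N ε (smax p (smin (endSwitch N (1 / 2) (1 / 2)) u))
        (smax p' (smin (endSwitch N (1 / 2 + ε') (1 / 2 - ε')) u')) i j

/-! Induction on `𝒫(ε)`. Write `h = a·δ₀ + b·δ_{N-1}`. At the left end `i` of a step
`p ⊕ (h ∗ u)` no mass lies below `i`, so the value there is `p i · (a + b · u i)`, where either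
`i = k` and `p i = 1`, or `i < k` and `u i = 0`. At the right end `j` all mass lies at or below `j`,
so the value is `p j + (h ∗ u) j · (1 - p j)`, where either `k = j` and `u j = 1`, or `k < j` and
`p j = 0`. Except in the trivial case `j = k = 0`, the perturbed value minus the ideal one is
`Δ / 2 ± ε̂ · y` with `Δ` an error bounded by induction and `y ∈ [0, 1]`, hence at most
`ε + ε = 2ε`. -/

open Finset

theorem abs_half_add_mul_le {ε ε' x y : ℝ} (hx : |x| ≤ 2 * ε) (hy : y ∈ Set.Icc (0 : ℝ) 1)
    (hε' : |ε'| ≤ ε) : |x / 2 + ε' * y| ≤ 2 * ε := by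
  have hεy : |ε' * y| ≤ ε := by
    rw [abs_mul, abs_of_nonneg hy.1]
    nlinarith [abs_nonneg ε', hy.1, hy.2]
  calc |x / 2 + ε' * y| ≤ |x / 2| + |ε' * y| := abs_add_le _ _
    _ ≤ 2 * ε := by rw [abs_div, abs_two]; linarith [abs_nonneg x]

theorem sum_sum_sum_ite_eq {α β γ : Type*} [Fintype α] [Fintype β] [DecidableEq γ]
    (s : Finset γ) (f : α → β → γ) (g : α → β → ℝ) :
    ∑ k ∈ s, ∑ a, ∑ b, (if f a b = k then g a b else 0) =
      ∑ a, ∑ b, if f a b ∈ s then g a b else 0 := by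
  rw [sum_comm]
  refine sum_congr rfl fun a _ => ?_
  rw [sum_comm]
  simp [sum_ite_eq]

section

variable {N : ℕ}

theorem sum_smin (p q : Fin N → ℝ) : ∑ k, smin p q k = (∑ k, p k) * ∑ k, q k := by
  simp [smin, sum_sum_sum_ite_eq, sum_mul_sum]

theorem sum_smax (p q : Fin N → ℝ) : ∑ k, smax p q k = (∑ k, p k) * ∑ k, q k := by
  simp [smax, sum_sum_sum_ite_eq, sum_mul_sum]

theorem sum_smax_of_max_mem_iff {s : Finset (Fin N)} (hs : ∀ a b, max a b ∈ s ↔ a ∈ s ∧ b ∈ s)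
    (p q : Fin N → ℝ) : ∑ k ∈ s, smax p q k = (∑ k ∈ s, p k) * ∑ k ∈ s, q k := by
  simp [smax, sum_sum_sum_ite_eq, hs, ite_and, sum_mul_sum, sum_ite_mem]

theorem smax_apply (p q : Fin N → ℝ) (t : Fin N) :
    smax p q t = p t * ∑ s ∈ Iic t, q s + q t * ∑ s ∈ Iio t, p s := by
  have hIic := sum_smax_of_max_mem_iff (s := Iic t) (by simp) p q
  have hIio := sum_smax_of_max_mem_iff (s := Iio t) (by simp) p q
  simp only [← Iio_insert, sum_insert notMem_Iio_self] at hIic ⊢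
  linear_combination hIic - hIio

theorem smin_nonneg {p q : Fin N → ℝ} (hp : 0 ≤ p) (hq : 0 ≤ q) : 0 ≤ smin p q :=
  fun _ => sum_nonneg fun i _ => sum_nonneg fun j _ => by
    split_ifs <;> first | exact mul_nonneg (hp i) (hq j) | rfl

theorem smax_nonneg {p q : Fin N → ℝ} (hp : 0 ≤ p) (hq : 0 ≤ q) : 0 ≤ smax p q :=
  fun _ => sum_nonneg fun i _ => sum_nonneg fun j _ => by
    split_ifs <;> first | exact mul_nonneg (hp i) (hq j) | rfl

theorem smin_mem_stdSimplex {p q : Fin N → ℝ} (hp : p ∈ stdSimplex ℝ (Fin N))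
    (hq : q ∈ stdSimplex ℝ (Fin N)) : smin p q ∈ stdSimplex ℝ (Fin N) :=
  ⟨smin_nonneg hp.1 hq.1, by rw [sum_smin, hp.2, hq.2, one_mul]⟩

theorem smax_mem_stdSimplex {p q : Fin N → ℝ} (hp : p ∈ stdSimplex ℝ (Fin N))
    (hq : q ∈ stdSimplex ℝ (Fin N)) : smax p q ∈ stdSimplex ℝ (Fin N) :=
  ⟨smax_nonneg hp.1 hq.1, by rw [sum_smax, hp.2, hq.2, one_mul]⟩

theorem delta_mem_stdSimplex (s : Fin N) : delta s ∈ stdSimplex ℝ (Fin N) := by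
  have h := ite_eq_mem_stdSimplex ℝ s
  simp only [@eq_comm _ s] at h
  exact h

theorem sum_Iio_eq_zero {p : Fin N → ℝ} {i : Fin N} (hp : ∀ t, p t ≠ 0 → i ≤ t) :
    ∑ s ∈ Iio i, p s = 0 :=
  sum_eq_zero fun s hs => by_contra fun h => (hp s h).not_gt (mem_Iio.1 hs)

theorem sum_Iic_eq_apply {p : Fin N → ℝ} {i : Fin N} (hp : ∀ t, p t ≠ 0 → i ≤ t) :
    ∑ s ∈ Iic i, p s = p i := by
  rw [← Iio_insert, sum_insert notMem_Iio_self, sum_Iio_eq_zero hp, add_zero]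

theorem sum_Iic_eq_sum {p : Fin N → ℝ} {j : Fin N} (hp : ∀ t, p t ≠ 0 → t ≤ j) :
    ∑ s ∈ Iic j, p s = ∑ s, p s :=
  sum_subset (subset_univ _) fun s _ hs => by_contra fun h => hs (mem_Iic.2 (hp s h))

theorem apply_eq_one_of_support_subset {p : Fin N → ℝ} {i : Fin N}
    (hp : p ∈ stdSimplex ℝ (Fin N)) (hpi : ∀ t, p t ≠ 0 → i ≤ t ∧ t ≤ i) : p i = 1 := by
  rw [← hp.2, Fintype.sum_eq_single i fun t ht =>
    by_contra fun h => ht (le_antisymm (hpi t h).2 (hpi t h).1)]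

theorem smax_apply_of_le {p q : Fin N → ℝ} {i : Fin N} (hp : ∀ t, p t ≠ 0 → i ≤ t) :
    smax p q i = p i * ∑ s ∈ Iic i, q s := by
  rw [smax_apply, sum_Iio_eq_zero hp, mul_zero, add_zero]

theorem smax_apply_of_ge {p q : Fin N → ℝ} {j : Fin N} (hp : p ∈ stdSimplex ℝ (Fin N))
    (hpj : ∀ t, p t ≠ 0 → t ≤ j) :
    smax p q j = p j * ∑ s ∈ Iic j, q s + q j * (1 - p j) := by
  have h := sum_Iic_eq_sum hpj
  rw [hp.2, ← Iio_insert, sum_insert notMem_Iio_self] at h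
  rw [smax_apply, ← h]
  ring

theorem smin_add_left (p q u : Fin N → ℝ) : smin (p + q) u = smin p u + smin q u := by
  ext t; simp only [smin, Pi.add_apply, add_mul, ← sum_add_distrib]; simp [ite_add_zero]

theorem smin_smul_left (c : ℝ) (p u : Fin N → ℝ) : smin (c • p) u = c • smin p u := by
  ext t; simp [smin, mul_sum, mul_assoc]

theorem Pert.le {ε : ℝ} {p p' : Fin N → ℝ} {i j : Fin N} (h : Pert N ε p p' i j) : i ≤ j := by
  induction h with
  | point s => exact le_rfl
  | step _ _ _ _ _ _ _ hik hkj => exact hik.trans hkj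

variable [NeZero N]

theorem smin_delta_bot (u : Fin N → ℝ) : smin (delta ⊥) u = (∑ s, u s) • delta ⊥ := by
  ext t
  rw [smin, Fintype.sum_eq_single ⊥ fun x hx => by simp [delta, hx]]
  simp [delta, eq_comm]

theorem smin_delta_top (u : Fin N → ℝ) : smin (delta ⊤) u = u := by
  ext t
  rw [smin, Fintype.sum_eq_single ⊤ fun x hx => by simp [delta, hx]]
  simp [delta]

theorem endSwitch_eq (a b : ℝ) : endSwitch N a b = a • delta ⊥ + b • delta ⊤ := by
  ext t
  simp only [endSwitch, delta, Pi.add_apply, Pi.smul_apply, smul_eq_mul, mul_ite, mul_one,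
    mul_zero, Fin.ext_iff, Fin.val_top, bot_eq_zero, Fin.val_zero]

theorem endSwitch_mem_stdSimplex {a b : ℝ} (ha : 0 ≤ a) (hb : 0 ≤ b) (hab : a + b = 1) :
    endSwitch N a b ∈ stdSimplex ℝ (Fin N) := by
  rw [endSwitch_eq]
  exact convex_stdSimplex ℝ (Fin N) (delta_mem_stdSimplex ⊥) (delta_mem_stdSimplex ⊤) ha hb hab

theorem smin_endSwitch (a b : ℝ) (u : Fin N → ℝ) :
    smin (endSwitch N a b) u = (a * ∑ s, u s) • delta ⊥ + b • u := by
  rw [endSwitch_eq, smin_add_left, smin_smul_left, smin_smul_left, smin_delta_bot,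
    smin_delta_top, smul_smul]

theorem smin_endSwitch_apply (a b : ℝ) (u : Fin N → ℝ) (t : Fin N) :
    smin (endSwitch N a b) u t = (if t = ⊥ then a * ∑ s, u s else 0) + b * u t := by
  simp [smin_endSwitch, delta]

theorem sum_Iic_smin_endSwitch (a b : ℝ) (u : Fin N → ℝ) (t : Fin N) :
    ∑ s ∈ Iic t, smin (endSwitch N a b) u s = a * ∑ s, u s + b * ∑ s ∈ Iic t, u s := by
  simp [smin_endSwitch, sum_add_distrib, mul_sum, delta]

theorem smax_smin_endSwitch_apply_of_le {a b : ℝ} {q v : Fin N → ℝ} {i : Fin N}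
    (hq : ∀ t, q t ≠ 0 → i ≤ t) (hv : v ∈ stdSimplex ℝ (Fin N)) (hvi : ∀ t, v t ≠ 0 → i ≤ t) :
    smax q (smin (endSwitch N a b) v) i = q i * (a + b * v i) := by
  rw [smax_apply_of_le hq, sum_Iic_smin_endSwitch, hv.2, sum_Iic_eq_apply hvi, mul_one]

theorem smax_smin_endSwitch_apply_of_ge {a b : ℝ} {q v : Fin N → ℝ} {j : Fin N}
    (hq : q ∈ stdSimplex ℝ (Fin N)) (hqj : ∀ t, q t ≠ 0 → t ≤ j)
    (hv : v ∈ stdSimplex ℝ (Fin N)) (hvj : ∀ t, v t ≠ 0 → t ≤ j) :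
    smax q (smin (endSwitch N a b) v) j =
      q j * (a + b) + ((if j = ⊥ then a else 0) + b * v j) * (1 - q j) := by
  rw [smax_apply_of_ge hq hqj, sum_Iic_smin_endSwitch, sum_Iic_eq_sum hvj,
    smin_endSwitch_apply, hv.2, mul_one, mul_one]

theorem Pert.mem_stdSimplex {ε : ℝ} {p p' : Fin N → ℝ} {i j : Fin N} (hε : ε ≤ 1 / 2)
    (h : Pert N ε p p' i j) :
    p ∈ stdSimplex ℝ (Fin N) ∧ p' ∈ stdSimplex ℝ (Fin N) := by
  induction h with
  | point s => exact ⟨delta_mem_stdSimplex s, delta_mem_stdSimplex s⟩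
  | step _ _ _ _ _ _ hε' hp hu =>
    obtain ⟨hε'₁, hε'₂⟩ := abs_le.1 hε'
    exact ⟨smax_mem_stdSimplex hp.1 (smin_mem_stdSimplex
        (endSwitch_mem_stdSimplex (by norm_num) (by norm_num) (by norm_num)) hu.1),
      smax_mem_stdSimplex hp.2 (smin_mem_stdSimplex
        (endSwitch_mem_stdSimplex (by linarith) (by linarith) (by ring)) hu.2)⟩

section step

variable {ε ε' : ℝ} {p p' u u' : Fin N → ℝ} {i k j : Fin N}

theorem abs_step_sub_le_left (hε : ε ≤ 1 / 2) (hp : Pert N ε p p' i k)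
    (hu : Pert N ε u u' k j) (sp : ∀ t, p t ≠ 0 → i ≤ t ∧ t ≤ k)
    (sp' : ∀ t, p' t ≠ 0 → i ≤ t ∧ t ≤ k) (su : ∀ t, u t ≠ 0 → k ≤ t ∧ t ≤ j)
    (su' : ∀ t, u' t ≠ 0 → k ≤ t ∧ t ≤ j) (hε' : |ε'| ≤ ε)
    (ihp : |p' i - p i| ≤ 2 * ε) (ihu : |u' k - u k| ≤ 2 * ε) :
    |smax p' (smin (endSwitch N (1 / 2 + ε') (1 / 2 - ε')) u') i -
        smax p (smin (endSwitch N (1 / 2) (1 / 2)) u) i| ≤ 2 * ε := by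
  obtain ⟨hP, hP'⟩ := hp.mem_stdSimplex hε
  obtain ⟨hU, hU'⟩ := hu.mem_stdSimplex hε
  have hik := hp.le
  rw [smax_smin_endSwitch_apply_of_le (fun t ht => (sp t ht).1) hU
      (fun t ht => hik.trans (su t ht).1),
    smax_smin_endSwitch_apply_of_le (fun t ht => (sp' t ht).1) hU'
      (fun t ht => hik.trans (su' t ht).1)]
  rcases hik.eq_or_lt with rfl | hik
  · have hu'i := mem_Icc_of_mem_stdSimplex hU' i
    rw [apply_eq_one_of_support_subset hP sp, apply_eq_one_of_support_subset hP' sp']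
    convert abs_half_add_mul_le ihu (y := 1 - u' i) ⟨by linarith [hu'i.2], by linarith [hu'i.1]⟩
      hε' using 2
    ring
  · have hui : u i = 0 := by_contra fun h => (su i h).1.not_gt hik
    have hu'i : u' i = 0 := by_contra fun h => (su' i h).1.not_gt hik
    rw [hui, hu'i]
    convert abs_half_add_mul_le ihp (mem_Icc_of_mem_stdSimplex hP' i) hε' using 2
    ring

theorem abs_step_sub_le_right (hε : ε ≤ 1 / 2) (hp : Pert N ε p p' i k)
    (hu : Pert N ε u u' k j) (sp : ∀ t, p t ≠ 0 → i ≤ t ∧ t ≤ k)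
    (sp' : ∀ t, p' t ≠ 0 → i ≤ t ∧ t ≤ k) (su : ∀ t, u t ≠ 0 → k ≤ t ∧ t ≤ j)
    (su' : ∀ t, u' t ≠ 0 → k ≤ t ∧ t ≤ j) (hε' : |ε'| ≤ ε)
    (ihp : |p' k - p k| ≤ 2 * ε) (ihu : |u' j - u j| ≤ 2 * ε) :
    |smax p' (smin (endSwitch N (1 / 2 + ε') (1 / 2 - ε')) u') j -
        smax p (smin (endSwitch N (1 / 2) (1 / 2)) u) j| ≤ 2 * ε := by
  obtain ⟨hP, hP'⟩ := hp.mem_stdSimplex hε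
  obtain ⟨hU, hU'⟩ := hu.mem_stdSimplex hε
  have hkj := hu.le
  have hε'' : |-ε'| ≤ ε := by rwa [abs_neg]
  rw [smax_smin_endSwitch_apply_of_ge hP (fun t ht => (sp t ht).2.trans hkj) hU
      (fun t ht => (su t ht).2),
    smax_smin_endSwitch_apply_of_ge hP' (fun t ht => (sp' t ht).2.trans hkj) hU'
      (fun t ht => (su' t ht).2)]
  rcases hkj.eq_or_lt with rfl | hkj
  · rw [apply_eq_one_of_support_subset hU su, apply_eq_one_of_support_subset hU' su']
    by_cases hk : k = ⊥
    · rw [if_pos hk, if_pos hk]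
      ring_nf
      simpa using (abs_nonneg ε').trans hε'
    · have hp'k := mem_Icc_of_mem_stdSimplex hP' k
      rw [if_neg hk, if_neg hk]
      convert abs_half_add_mul_le ihp (y := 1 - p' k) ⟨by linarith [hp'k.2], by linarith [hp'k.1]⟩
        hε'' using 2
      ring
  · have hpj : p j = 0 := by_contra fun h => (sp j h).2.not_gt hkj
    have hp'j : p' j = 0 := by_contra fun h => (sp' j h).2.not_gt hkj
    have hj : j ≠ ⊥ := (bot_le.trans_lt hkj).ne'
    rw [hpj, hp'j, if_neg hj, if_neg hj]
    convert abs_half_add_mul_le ihu (mem_Icc_of_mem_stdSimplex hU' j) hε'' using 2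
    ring

end step

end

theorem boundary_error_general (N : ℕ) (ε : ℝ) (hε0 : 0 ≤ ε) (hε : ε ≤ 1 / 2)
    (p p' : Fin N → ℝ) (i j : Fin N) (h : Pert N ε p p' i j) :
    |p' i - p i| ≤ 2 * ε ∧ |p' j - p j| ≤ 2 * ε := by
  have : NeZero N := NeZero.of_pos i.pos
  induction h with
  | point s => simpa using hε0
  | step hp hu sp sp' su su' hε' ihp ihu =>
    exact ⟨abs_step_sub_le_left hε hp hu sp sp' su su' hε' ihp.1 ihu.1,
      abs_step_sub_le_right hε hp hu sp sp' su su' hε' ihp.2 ihu.2⟩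

/-- Error bound on boundary states: for every `(p, p̃, (i, j))` in `𝒫(ε)`, the
errors at the boundary states `i` and `j` are at most `2ε`. -/
theorem boundary_error (N : ℕ) (hN : 2 ≤ N) (ε : ℝ) (hε0 : 0 ≤ ε) (hε : ε ≤ 1 / 2)
    (p p' : Fin N → ℝ) (i j : Fin N) (h : Pert N ε p p' i j) :
    |p' i - p i| ≤ 2 * ε ∧ |p' j - p j| ≤ 2 * ε :=
  boundary_error_general N ε hε0 hε p p' i j h
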